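/- arXiv:1904.12897 — 2 statements merged into one kernel-verified Lean document; each statement's English description precedes it below -/
import Mathlib

section
/- Let G_1,…,G_p be finite nonempty sets of positive integers satisfying Assumption C, let ℓ* = max_j |G_j|, J^(ℓ) = {j : |G_j| ≥ ℓ}, and let R^(ℓ) and R = R^(1) be as defined, and let W be a symmetric matrix with W_{jk} = W_{kj} ≥ 0. Then min_{1≤ℓ≤ℓ*} λ_min( (R^(ℓ)∘W)_{J^(ℓ),J^(ℓ)} ) = λ_min(R∘W). -/
noncomputable section

/-- Largest eigenvalue of a symmetric real matrix via its Rayleigh quotient. -/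
def lamMax {n : Type*} [Fintype n] (A : Matrix n n ℝ) : ℝ :=
  sSup {r | ∃ u : n → ℝ, (∑ i, (u i) ^ 2) = 1 ∧ r = ∑ i, ∑ j, u i * A i j * u j}

/-- Smallest eigenvalue of a symmetric real matrix via its Rayleigh quotient. -/
def lamMin {n : Type*} [Fintype n] (A : Matrix n n ℝ) : ℝ :=
  sInf {r | ∃ u : n → ℝ, (∑ i, (u i) ^ 2) = 1 ∧ r = ∑ i, ∑ j, u i * A i j * u j}

/-- The `ℓ`-th order Hoeffding-projection matrix `R^(ℓ)` with entries
`C(|G_j∩G_k|,ℓ) C(|G_j|,ℓ)^{−1/2} C(|G_k|,ℓ)^{−1/2}` (with `C(a,ℓ)=0` for `a<ℓ`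
and the convention `0/0 = 0`). In particular `R = R^(1)` has entries
`|G_j∩G_k|/√(|G_j|·|G_k|)`. -/
def Rl {p : ℕ} (G : Fin p → Finset ℕ) (ℓ : ℕ) : Matrix (Fin p) (Fin p) ℝ :=
  Matrix.of fun j k => (Nat.choose ((G j ∩ G k).card) ℓ : ℝ) /
    (Real.sqrt (Nat.choose (G j).card ℓ) * Real.sqrt (Nat.choose (G k).card ℓ))

/-- Assumption C. -/
def AssumptionC {p : ℕ} (G : Fin p → Finset ℕ) : Prop :=
  ∃ G0 : Fin p → Finset ℕ,
    (∀ j k : Fin p, j < k → (G0 j ∩ G0 k).card = (G j ∩ G k).card - 1) ∧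
    (∀ j, (G0 j).card ≤ (G j).card - 1)

namespace AuxLemma4

/-- The Rayleigh set of a matrix. -/
def rset {n : Type*} [Fintype n] (A : Matrix n n ℝ) : Set ℝ :=
  {r | ∃ u : n → ℝ, (∑ i, (u i) ^ 2) = 1 ∧ r = ∑ i, ∑ j, u i * A i j * u j}

lemma lamMin_eq_sInf_rset {n : Type*} [Fintype n] (A : Matrix n n ℝ) :
    lamMin A = sInf (rset A) := rfl

lemma rset_bddBelow {n : Type*} [Fintype n] (A : Matrix n n ℝ) :
    BddBelow (rset A) := by
  refine ⟨-(∑ i, ∑ j, |A i j|), ?_⟩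
  rintro r ⟨u, hu, rfl⟩
  have habs : ∀ i, |u i| ≤ 1 := by
    intro i
    rw [← sq_le_one_iff_abs_le_one]
    calc u i ^ 2 ≤ ∑ k, (u k) ^ 2 :=
          Finset.single_le_sum (f := fun k => (u k) ^ 2)
            (fun k _ => sq_nonneg _) (Finset.mem_univ i)
      _ = 1 := hu
  have key : |∑ i, ∑ j, u i * A i j * u j| ≤ ∑ i, ∑ j, |A i j| := by
    calc |∑ i, ∑ j, u i * A i j * u j| ≤ ∑ i, |∑ j, u i * A i j * u j| :=
          Finset.abs_sum_le_sum_abs _ _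
      _ ≤ ∑ i, ∑ j, |u i * A i j * u j| :=
          Finset.sum_le_sum fun i _ => Finset.abs_sum_le_sum_abs _ _
      _ ≤ ∑ i, ∑ j, |A i j| := by
          refine Finset.sum_le_sum fun i _ => Finset.sum_le_sum fun j _ => ?_
          rw [abs_mul, abs_mul]
          calc |u i| * |A i j| * |u j| ≤ 1 * |A i j| * 1 := by
                apply mul_le_mul (mul_le_mul (habs i) le_rfl (abs_nonneg _) zero_le_one)
                  (habs j) (abs_nonneg _)
                positivity
            _ = |A i j| := by ring
  linarith [neg_abs_le (∑ i, ∑ j, u i * A i j * u j)]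

lemma lamMin_le_quad {n : Type*} [Fintype n] (A : Matrix n n ℝ) {u : n → ℝ}
    (hu : (∑ i, (u i) ^ 2) = 1) : lamMin A ≤ ∑ i, ∑ j, u i * A i j * u j :=
  csInf_le (rset_bddBelow A) ⟨u, hu, rfl⟩

lemma lamMin_mul_le {n : Type*} [Fintype n] (A : Matrix n n ℝ) (x : n → ℝ) :
    lamMin A * (∑ i, (x i) ^ 2) ≤ ∑ i, ∑ j, x i * A i j * x j := by
  set s := ∑ i, (x i) ^ 2 with hs
  have hs0 : 0 ≤ s := Finset.sum_nonneg fun i _ => sq_nonneg _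
  rcases eq_or_lt_of_le hs0 with h0 | hpos
  · have hx : ∀ i, x i = 0 := by
      intro i
      have := (Finset.sum_eq_zero_iff_of_nonneg (fun k _ => sq_nonneg (x k))).mp h0.symm
        i (Finset.mem_univ i)
      exact (pow_eq_zero_iff two_ne_zero).mp this
    have h1 : (∑ i, ∑ j, x i * A i j * x j) = 0 := by
      apply Finset.sum_eq_zero; intro i _
      apply Finset.sum_eq_zero; intro j _
      rw [hx i]; ring
    rw [h1, ← h0, mul_zero]
  · have hsne : s ≠ 0 := ne_of_gt hpos
    set u : n → ℝ := fun i => x i / Real.sqrt s with hudef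
    have hsq : Real.sqrt s * Real.sqrt s = s := Real.mul_self_sqrt hs0
    have hu : (∑ i, (u i) ^ 2) = 1 := by
      have : ∀ i, (u i) ^ 2 = (x i) ^ 2 / s := by
        intro i; rw [hudef]; rw [div_pow, Real.sq_sqrt hs0]
      rw [Finset.sum_congr rfl fun i _ => this i, ← Finset.sum_div, ← hs, div_self hsne]
    have hquad : (∑ i, ∑ j, u i * A i j * u j) = (∑ i, ∑ j, x i * A i j * x j) / s := by
      rw [← hsq]
      rw [Finset.sum_div]
      refine Finset.sum_congr rfl fun i _ => ?_
      rw [Finset.sum_div]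
      refine Finset.sum_congr rfl fun j _ => ?_
      have hsqrt_ne : Real.sqrt s ≠ 0 := by
        intro h; rw [h, mul_zero] at hsq; exact hsne hsq.symm
      rw [hudef]
      field_simp
    have := lamMin_le_quad A hu
    rw [hquad, le_div_iff₀ hpos] at this
    linarith
  -- done

lemma lamMin_le_diag {n : Type*} [Fintype n] [DecidableEq n] (A : Matrix n n ℝ) (i : n) :
    lamMin A ≤ A i i := by
  have hu : (∑ k, ((fun k => if k = i then (1:ℝ) else 0) k) ^ 2) = 1 := by
    simp [ite_pow]
  have := lamMin_le_quad A hu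
  simpa using this

/-- `a * C(a-1, ℓ-1) = ℓ * C(a, ℓ)` for `1 ≤ ℓ`. -/
lemma nat_choose_id (a ℓ : ℕ) (hl : 1 ≤ ℓ) :
    a * Nat.choose (a - 1) (ℓ - 1) = ℓ * Nat.choose a ℓ := by
  obtain ⟨k, rfl⟩ : ∃ k, ℓ = k + 1 := ⟨ℓ - 1, by omega⟩
  cases a with
  | zero =>
    have : Nat.choose 0 (k + 1) = 0 := Nat.choose_eq_zero_of_lt (Nat.succ_pos k)
    simp [this]
  | succ n =>
    simp only [Nat.add_sub_cancel]
    have h := Nat.add_one_mul_choose_eq n k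
    calc (n + 1) * Nat.choose n k = Nat.choose (n + 1) (k + 1) * (k + 1) := h
      _ = (k + 1) * Nat.choose (n + 1) (k + 1) := Nat.mul_comm _ _

lemma sqrt_choose_mul (n ℓ : ℕ) (hl : 1 ≤ ℓ) (hn : ℓ ≤ n) :
    Real.sqrt n * Real.sqrt (Nat.choose (n - 1) (ℓ - 1)) =
    Real.sqrt ℓ * Real.sqrt (Nat.choose n ℓ) := by
  rw [← Real.sqrt_mul (by positivity), ← Real.sqrt_mul (by positivity)]
  congr 1
  exact_mod_cast nat_choose_id n ℓ hl

/-- The key entrywise identity `R^(ℓ)_{jk} = R_{jk} · S_{jk}`. -/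
lemma key_identity (a b c ℓ : ℕ) (hl : 1 ≤ ℓ) (hb : ℓ ≤ b) (hc : ℓ ≤ c) :
    (Nat.choose a ℓ : ℝ) / (Real.sqrt (Nat.choose b ℓ) * Real.sqrt (Nat.choose c ℓ)) =
    ((a : ℝ) / (Real.sqrt b * Real.sqrt c)) *
      ((Nat.choose (a - 1) (ℓ - 1) : ℝ) /
        (Real.sqrt (Nat.choose (b - 1) (ℓ - 1)) * Real.sqrt (Nat.choose (c - 1) (ℓ - 1)))) := by
  have hlpos : (0:ℝ) < ℓ := by exact_mod_cast hl
  rw [div_mul_div_comm]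
  have hnum : (a : ℝ) * (Nat.choose (a - 1) (ℓ - 1) : ℝ) = (ℓ : ℝ) * (Nat.choose a ℓ : ℝ) := by
    exact_mod_cast nat_choose_id a ℓ hl
  have hden : Real.sqrt b * Real.sqrt c *
      (Real.sqrt (Nat.choose (b - 1) (ℓ - 1)) * Real.sqrt (Nat.choose (c - 1) (ℓ - 1))) =
      (ℓ : ℝ) * (Real.sqrt (Nat.choose b ℓ) * Real.sqrt (Nat.choose c ℓ)) := by
    have h1 := sqrt_choose_mul b ℓ hl hb
    have h2 := sqrt_choose_mul c ℓ hl hc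
    have hll : Real.sqrt ℓ * Real.sqrt ℓ = (ℓ : ℝ) := Real.mul_self_sqrt (by positivity)
    calc Real.sqrt b * Real.sqrt c *
        (Real.sqrt (Nat.choose (b - 1) (ℓ - 1)) * Real.sqrt (Nat.choose (c - 1) (ℓ - 1)))
        = (Real.sqrt b * Real.sqrt (Nat.choose (b - 1) (ℓ - 1))) *
          (Real.sqrt c * Real.sqrt (Nat.choose (c - 1) (ℓ - 1))) := by ring
      _ = (Real.sqrt ℓ * Real.sqrt (Nat.choose b ℓ)) *
          (Real.sqrt ℓ * Real.sqrt (Nat.choose c ℓ)) := by rw [h1, h2]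
      _ = (Real.sqrt ℓ * Real.sqrt ℓ) *
          (Real.sqrt (Nat.choose b ℓ) * Real.sqrt (Nat.choose c ℓ)) := by ring
      _ = (ℓ : ℝ) * (Real.sqrt (Nat.choose b ℓ) * Real.sqrt (Nat.choose c ℓ)) := by rw [hll]
  rw [hnum, hden, mul_div_mul_left _ _ (ne_of_gt hlpos)]

lemma sum_indicator_subsets (U A : Finset ℕ) (m : ℕ) (hA : A ⊆ U) :
    (∑ T ∈ U.powersetCard m, (if T ⊆ A then (1:ℝ) else 0)) = (Nat.choose A.card m : ℝ) := by
  rw [Finset.sum_boole]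
  norm_cast
  have : (U.powersetCard m).filter (fun T => T ⊆ A) = A.powersetCard m := by
    ext T
    simp only [Finset.mem_filter, Finset.mem_powersetCard]
    constructor
    · rintro ⟨⟨_, hcard⟩, hTA⟩; exact ⟨hTA, hcard⟩
    · rintro ⟨hTA, hcard⟩; exact ⟨⟨hTA.trans hA, hcard⟩, hTA⟩
  rw [this, Finset.card_powersetCard]

/-- Extension of a subtype-indexed sum to a full sum against the zero-extension. -/
lemma sum_extend {p : ℕ} (P : Fin p → Prop) [DecidablePred P]
    (u : {j : Fin p // P j} → ℝ) (F : Fin p → ℝ) :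
    (∑ j : {j : Fin p // P j}, u j * F j.val) =
    ∑ i : Fin p, (if h : P i then u ⟨i, h⟩ else 0) * F i := by
  classical
  rw [← Finset.sum_filter_add_sum_filter_not Finset.univ P
    (fun i => (if h : P i then u ⟨i, h⟩ else 0) * F i)]
  have h2 : (∑ i ∈ Finset.univ.filter (fun i => ¬ P i),
      (if h : P i then u ⟨i, h⟩ else 0) * F i) = 0 := by
    apply Finset.sum_eq_zero
    intro i hi
    rw [Finset.mem_filter] at hi
    rw [dif_neg hi.2, zero_mul]
  rw [h2, add_zero]
  rw [Finset.sum_subtype (p := P) (Finset.univ.filter P) (by simp)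
    (fun i => (if h : P i then u ⟨i, h⟩ else 0) * F i)]
  refine Finset.sum_congr rfl fun j _ => ?_
  rw [dif_pos j.2]

lemma sum_sq_extend {p : ℕ} (P : Fin p → Prop) [DecidablePred P]
    (u : {j : Fin p // P j} → ℝ) :
    (∑ j : {j : Fin p // P j}, (u j) ^ 2) =
    ∑ i : Fin p, ((if h : P i then u ⟨i, h⟩ else 0)) ^ 2 := by
  have := sum_extend P u (fun i => if h : P i then u ⟨i, h⟩ else 0)
  have hl : (∑ j : {j : Fin p // P j}, u j * (if h : P j.val then u ⟨j.val, h⟩ else 0)) =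
      ∑ j : {j : Fin p // P j}, (u j) ^ 2 := by
    refine Finset.sum_congr rfl fun j _ => ?_
    rw [dif_pos j.2, sq]
  rw [hl] at this
  rw [this]
  exact Finset.sum_congr rfl fun i _ => (sq _).symm

lemma quad_extend {p : ℕ} (P : Fin p → Prop) [DecidablePred P]
    (A : Matrix (Fin p) (Fin p) ℝ) (u : {j : Fin p // P j} → ℝ) :
    (∑ j : {j : Fin p // P j}, ∑ k : {j : Fin p // P j}, u j * A j.val k.val * u k) =
    ∑ i, ∑ i', (if h : P i then u ⟨i, h⟩ else 0) * A i i' *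
      (if h : P i' then u ⟨i', h⟩ else 0) := by
  classical
  set x : Fin p → ℝ := fun i => if h : P i then u ⟨i, h⟩ else 0 with hx
  have inner : ∀ i : Fin p, (∑ k : {j : Fin p // P j}, u k * A i k.val) =
      ∑ i', x i' * A i i' := fun i => sum_extend P u (A i)
  calc (∑ j : {j : Fin p // P j}, ∑ k : {j : Fin p // P j}, u j * A j.val k.val * u k)
      = ∑ j : {j : Fin p // P j}, u j * (∑ k : {j : Fin p // P j}, u k * A j.val k.val) := by
        refine Finset.sum_congr rfl fun j _ => ?_
        rw [Finset.mul_sum]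
        exact Finset.sum_congr rfl fun k _ => by ring
    _ = ∑ j : {j : Fin p // P j}, u j * (∑ i', x i' * A j.val i') := by
        refine Finset.sum_congr rfl fun j _ => ?_
        rw [inner j.val]
    _ = ∑ i, x i * (∑ i', x i' * A i i') :=
        sum_extend P u (fun i => ∑ i', x i' * A i i')
    _ = ∑ i, ∑ i', x i * A i i' * x i' := by
        refine Finset.sum_congr rfl fun i _ => ?_
        rw [Finset.mul_sum]
        exact Finset.sum_congr rfl fun i' _ => by ring

/-- Rayleigh bound for vectors supported on a subtype. -/
lemma quad_subtype_ge {p : ℕ} (P : Fin p → Prop) [DecidablePred P]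
    (A : Matrix (Fin p) (Fin p) ℝ) (w : {j : Fin p // P j} → ℝ) :
    lamMin A * (∑ j : {j : Fin p // P j}, (w j) ^ 2) ≤
    ∑ j : {j : Fin p // P j}, ∑ k : {j : Fin p // P j}, w j * A j.val k.val * w k := by
  rw [sum_sq_extend P w, quad_extend P A w]
  exact lamMin_mul_le A _

/-- Invariance of `lamMin` under reindexing by an equivalence. -/
lemma lamMin_submatrix_equiv {m n : Type*} [Fintype m] [Fintype n] (e : m ≃ n)
    (A : Matrix n n ℝ) : lamMin (A.submatrix e e) = lamMin A := by
  have key : ∀ x : n → ℝ, (∑ i, ∑ j, x i * A i j * x j) =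
      ∑ a, ∑ b, x (e a) * A (e a) (e b) * x (e b) := by
    intro x
    rw [← Equiv.sum_comp e (fun i => ∑ j, x i * A i j * x j)]
    refine Finset.sum_congr rfl fun a _ => ?_
    rw [← Equiv.sum_comp e (fun j => x (e a) * A (e a) j * x j)]
  have key2 : ∀ x : n → ℝ, (∑ i, (x i) ^ 2) = ∑ a, (x (e a)) ^ 2 :=
    fun x => (Equiv.sum_comp e (fun i => (x i) ^ 2)).symm
  unfold lamMin
  congr 1
  ext r
  constructor
  · rintro ⟨u, hu, rfl⟩
    refine ⟨u ∘ e.symm, ?_, ?_⟩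
    · rw [key2 (u ∘ e.symm), ← hu]
      refine Finset.sum_congr rfl fun a _ => ?_
      simp
    · rw [key (u ∘ e.symm)]
      refine Finset.sum_congr rfl fun a _ => Finset.sum_congr rfl fun b _ => ?_
      simp [Matrix.submatrix_apply]
  · rintro ⟨x, hx, rfl⟩
    refine ⟨x ∘ e, ?_, ?_⟩
    · rw [← hx, key2 x]
      exact Finset.sum_congr rfl fun a _ => rfl
    · rw [key x]
      exact Finset.sum_congr rfl fun a _ => Finset.sum_congr rfl fun b _ => rfl


/-- The key lower bound: `λ_min(R∘W) ≤ λ_min((R^(ℓ)∘W)_{J,J})`. -/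
lemma lower_bound {p : ℕ} (G : Fin p → Finset ℕ) (hC : AssumptionC G)
    (W : Matrix (Fin p) (Fin p) ℝ) (ℓ : ℕ) (hl : 1 ≤ ℓ) (hJ : ∃ j, ℓ ≤ (G j).card) :
    lamMin (Matrix.hadamard (Rl G 1) W) ≤
      lamMin ((Matrix.hadamard (Rl G ℓ) W).submatrix
        (Subtype.val : {j : Fin p // ℓ ≤ (G j).card} → Fin p) Subtype.val) := by
  classical
  obtain ⟨G0, hG0lt, hG0card⟩ := hC
  set M := Matrix.hadamard (Rl G 1) W with hM
  set lam := lamMin M with hlam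
  set U : Finset ℕ := Finset.univ.biUnion G0 with hU
  set F : Finset (Finset ℕ) := U.powersetCard (ℓ - 1) with hF
  set v : {j : Fin p // ℓ ≤ (G j).card} → Finset ℕ → ℝ :=
    fun j T => (if T ⊆ G0 j.val then (1:ℝ) else 0) /
      Real.sqrt (Nat.choose ((G j.val).card - 1) (ℓ - 1)) with hv
  set g : {j : Fin p // ℓ ≤ (G j).card} → {j : Fin p // ℓ ≤ (G j).card} → ℝ :=
    fun j k => ∑ T ∈ F, v j T * v k T with hg
  have hG0inter : ∀ j k : Fin p, j ≠ k → (G0 j ∩ G0 k).card = (G j ∩ G k).card - 1 := by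
    intro j k hjk
    rcases lt_or_gt_of_ne hjk with h | h
    · exact hG0lt j k h
    · rw [Finset.inter_comm, Finset.inter_comm (G j)]
      exact hG0lt k j h
  have hcpos : ∀ j : {j : Fin p // ℓ ≤ (G j).card},
      0 < Nat.choose ((G j.val).card - 1) (ℓ - 1) := by
    intro j
    exact Nat.choose_pos (by have := j.2; omega)
  have f1 : ∀ j k : {j : Fin p // ℓ ≤ (G j).card},
      g j k = (Nat.choose ((G0 j.val ∩ G0 k.val).card) (ℓ - 1) : ℝ) /
        (Real.sqrt (Nat.choose ((G j.val).card - 1) (ℓ - 1)) *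
          Real.sqrt (Nat.choose ((G k.val).card - 1) (ℓ - 1))) := by
    intro j k
    have hsub : G0 j.val ∩ G0 k.val ⊆ U :=
      Finset.inter_subset_left.trans (Finset.subset_biUnion_of_mem G0 (Finset.mem_univ j.val))
    calc g j k
        = ∑ T ∈ F, (if T ⊆ G0 j.val ∩ G0 k.val then (1:ℝ) else 0) /
            (Real.sqrt (Nat.choose ((G j.val).card - 1) (ℓ - 1)) *
              Real.sqrt (Nat.choose ((G k.val).card - 1) (ℓ - 1))) := by
          rw [hg]
          refine Finset.sum_congr rfl fun T _ => ?_
          simp only [hv]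
          rw [div_mul_div_comm]
          congr 1
          by_cases h1 : T ⊆ G0 j.val <;> by_cases h2 : T ⊆ G0 k.val <;>
            simp [h1, h2, Finset.subset_inter_iff]
      _ = (∑ T ∈ F, (if T ⊆ G0 j.val ∩ G0 k.val then (1:ℝ) else 0)) /
            (Real.sqrt (Nat.choose ((G j.val).card - 1) (ℓ - 1)) *
              Real.sqrt (Nat.choose ((G k.val).card - 1) (ℓ - 1))) := by
          rw [Finset.sum_div]
      _ = _ := by rw [hF, sum_indicator_subsets U _ (ℓ - 1) hsub]
  have f2a : ∀ j : {j : Fin p // ℓ ≤ (G j).card}, 0 ≤ g j j := by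
    intro j
    exact Finset.sum_nonneg fun T _ => mul_self_nonneg _
  have f2b : ∀ j : {j : Fin p // ℓ ≤ (G j).card}, g j j ≤ 1 := by
    intro j
    rw [f1 j j, Finset.inter_self,
      Real.mul_self_sqrt (by positivity)]
    rw [div_le_one (by exact_mod_cast hcpos j)]
    exact_mod_cast Nat.choose_le_choose (ℓ - 1) (hG0card j.val)
  have hdiagl : ∀ j : {j : Fin p // ℓ ≤ (G j).card}, Rl G ℓ j.val j.val = 1 := by
    intro j
    simp only [Rl, Matrix.of_apply, Finset.inter_self]
    rw [Real.mul_self_sqrt (by positivity)]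
    exact div_self (by exact_mod_cast (Nat.choose_pos j.2).ne')
  have hdiag1 : ∀ j : {j : Fin p // ℓ ≤ (G j).card}, Rl G 1 j.val j.val = 1 := by
    intro j
    simp only [Rl, Matrix.of_apply, Finset.inter_self]
    rw [Real.mul_self_sqrt (by positivity)]
    exact div_self (by exact_mod_cast (Nat.choose_pos (hl.trans j.2)).ne')
  have hentry : ∀ j k : {j : Fin p // ℓ ≤ (G j).card}, j ≠ k →
      Rl G ℓ j.val k.val = Rl G 1 j.val k.val * g j k := by
    intro j k hjk
    have hjk' : j.val ≠ k.val := fun h => hjk (Subtype.ext h)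
    rw [f1 j k, hG0inter j.val k.val hjk']
    simp only [Rl, Matrix.of_apply, Nat.choose_one_right]
    exact key_identity ((G j.val ∩ G k.val).card) ((G j.val).card) ((G k.val).card)
      ℓ hl j.2 k.2
  apply le_csInf
  · obtain ⟨j0, hj0⟩ := hJ
    refine ⟨_, ⟨fun j => if j = (⟨j0, hj0⟩ : {j : Fin p // ℓ ≤ (G j).card}) then (1:ℝ) else 0,
      ?_, rfl⟩⟩
    simp [ite_pow]
  · rintro r ⟨u, hu, rfl⟩
    have hterm : ∀ j k : {j : Fin p // ℓ ≤ (G j).card},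
        u j * ((Matrix.hadamard (Rl G ℓ) W).submatrix Subtype.val Subtype.val j k) * u k
        = u j * (M j.val k.val * g j k) * u k +
          (if j = k then (1 - g j j) * M j.val j.val * u j * u j else 0) := by
      intro j k
      by_cases hjk : j = k
      · subst hjk
        rw [if_pos rfl, Matrix.submatrix_apply, Matrix.hadamard_apply, hdiagl j]
        have hMd : M j.val j.val = W j.val j.val := by
          rw [hM, Matrix.hadamard_apply, hdiag1 j, one_mul]
        rw [hMd]
        ring
      · rw [if_neg hjk, add_zero, Matrix.submatrix_apply, Matrix.hadamard_apply,
          hentry j k hjk]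
        have hMd : M j.val k.val = Rl G 1 j.val k.val * W j.val k.val := by
          rw [hM, Matrix.hadamard_apply]
        rw [hMd]
        ring
    have hsplitsum :
        (∑ j : {j : Fin p // ℓ ≤ (G j).card}, ∑ k : {j : Fin p // ℓ ≤ (G j).card},
          u j * ((Matrix.hadamard (Rl G ℓ) W).submatrix Subtype.val Subtype.val j k) * u k)
        = (∑ j : {j : Fin p // ℓ ≤ (G j).card}, ∑ k : {j : Fin p // ℓ ≤ (G j).card},
            u j * (M j.val k.val * g j k) * u k) +
          ∑ j : {j : Fin p // ℓ ≤ (G j).card}, (1 - g j j) * M j.val j.val * u j * u j := by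
      rw [Finset.sum_congr rfl fun j _ => Finset.sum_congr rfl fun k _ => hterm j k]
      rw [← Finset.sum_add_distrib]
      refine Finset.sum_congr rfl fun j _ => ?_
      rw [Finset.sum_add_distrib]
      congr 1
      simp
    have hA : (∑ j : {j : Fin p // ℓ ≤ (G j).card}, ∑ k : {j : Fin p // ℓ ≤ (G j).card},
          u j * (M j.val k.val * g j k) * u k)
        = ∑ T ∈ F, ∑ j : {j : Fin p // ℓ ≤ (G j).card}, ∑ k : {j : Fin p // ℓ ≤ (G j).card},
            (u j * v j T) * M j.val k.val * (u k * v k T) := by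
      have step1 : ∀ j k : {j : Fin p // ℓ ≤ (G j).card},
          u j * (M j.val k.val * g j k) * u k
          = ∑ T ∈ F, (u j * v j T) * M j.val k.val * (u k * v k T) := by
        intro j k
        rw [hg]
        rw [Finset.mul_sum, Finset.mul_sum, Finset.sum_mul]
        refine Finset.sum_congr rfl fun T _ => ?_
        ring
      rw [Finset.sum_congr rfl fun j _ => Finset.sum_congr rfl fun k _ => step1 j k]
      rw [Finset.sum_congr rfl fun j (_ : j ∈ Finset.univ) => Finset.sum_comm]
      rw [Finset.sum_comm]
    have hgs : (∑ T ∈ F, ∑ j : {j : Fin p // ℓ ≤ (G j).card}, (u j * v j T) ^ 2)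
        = ∑ j : {j : Fin p // ℓ ≤ (G j).card}, u j ^ 2 * g j j := by
      rw [Finset.sum_comm]
      refine Finset.sum_congr rfl fun j _ => ?_
      rw [hg, Finset.mul_sum]
      refine Finset.sum_congr rfl fun T _ => ?_
      ring
    have hsplit1 : ((∑ j : {j : Fin p // ℓ ≤ (G j).card}, u j ^ 2 * g j j) +
        ∑ j : {j : Fin p // ℓ ≤ (G j).card}, (1 - g j j) * u j ^ 2) = 1 := by
      have hjj : ∀ j : {j : Fin p // ℓ ≤ (G j).card},
          u j ^ 2 * g j j + (1 - g j j) * u j ^ 2 = u j ^ 2 := fun j => by ring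
      rw [← Finset.sum_add_distrib, Finset.sum_congr rfl fun j _ => hjj j, hu]
    calc lam = lam * ((∑ j : {j : Fin p // ℓ ≤ (G j).card}, u j ^ 2 * g j j) +
          ∑ j : {j : Fin p // ℓ ≤ (G j).card}, (1 - g j j) * u j ^ 2) := by
          rw [hsplit1, mul_one]
      _ = (∑ T ∈ F, lam * ∑ j : {j : Fin p // ℓ ≤ (G j).card}, (u j * v j T) ^ 2) +
          ∑ j : {j : Fin p // ℓ ≤ (G j).card}, lam * ((1 - g j j) * u j ^ 2) := by
          rw [mul_add, ← hgs, ← Finset.mul_sum, ← Finset.mul_sum]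
      _ ≤ (∑ T ∈ F, ∑ j : {j : Fin p // ℓ ≤ (G j).card}, ∑ k : {j : Fin p // ℓ ≤ (G j).card},
            (u j * v j T) * M j.val k.val * (u k * v k T)) +
          ∑ j : {j : Fin p // ℓ ≤ (G j).card}, (1 - g j j) * M j.val j.val * u j * u j := by
          refine add_le_add (Finset.sum_le_sum fun T _ => ?_)
            (Finset.sum_le_sum fun j _ => ?_)
          · exact quad_subtype_ge (fun j => ℓ ≤ (G j).card) M (fun j => u j * v j T)
          · have hMd : lam ≤ M j.val j.val := lamMin_le_diag M j.val
            have hc : 0 ≤ (1 - g j j) * u j ^ 2 :=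
              mul_nonneg (by linarith [f2b j]) (sq_nonneg _)
            calc lam * ((1 - g j j) * u j ^ 2)
                ≤ M j.val j.val * ((1 - g j j) * u j ^ 2) :=
                  mul_le_mul_of_nonneg_right hMd hc
              _ = (1 - g j j) * M j.val j.val * u j * u j := by ring
      _ = ∑ j : {j : Fin p // ℓ ≤ (G j).card}, ∑ k : {j : Fin p // ℓ ≤ (G j).card},
            u j * ((Matrix.hadamard (Rl G ℓ) W).submatrix Subtype.val Subtype.val j k) * u k := by
          rw [hsplitsum, hA]

end AuxLemma4

open AuxLemma4 in
/-- Lemma 4: under Assumption C, the minimum over `1 ≤ ℓ ≤ ℓ*` of the smallest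
eigenvalues of the principal submatrices `(R^(ℓ)∘W)_{J^(ℓ),J^(ℓ)}` equals
`λ_min(R∘W)`. -/
theorem min_eigenvalue_hoeffding_projections_eq
    {p : ℕ} (G : Fin p → Finset ℕ) (hGne : ∀ j, (G j).Nonempty)
    (hC : AssumptionC G)
    (W : Matrix (Fin p) (Fin p) ℝ) (hWsymm : ∀ j k, W j k = W k j)
    (hWnonneg : ∀ j k, 0 ≤ W j k)
    (lstar : ℕ) (hlstar : lstar = Finset.univ.sup fun j => (G j).card) :
    sInf {r | ∃ ℓ : ℕ, 1 ≤ ℓ ∧ ℓ ≤ lstar ∧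
        r = lamMin ((Matrix.hadamard (Rl G ℓ) W).submatrix
          (Subtype.val : {j : Fin p // ℓ ≤ (G j).card} → Fin p) Subtype.val)} =
      lamMin (Matrix.hadamard (Rl G 1) W) := by
  classical
  rcases Nat.eq_zero_or_pos p with hp0 | hp
  · subst hp0
    have hl0 : lstar = 0 := by simp [hlstar]
    have hempty : {r | ∃ ℓ : ℕ, 1 ≤ ℓ ∧ ℓ ≤ lstar ∧
        r = lamMin ((Matrix.hadamard (Rl G ℓ) W).submatrix
          (Subtype.val : {j : Fin 0 // ℓ ≤ (G j).card} → Fin 0) Subtype.val)} = ∅ := by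
      ext r
      simp only [Set.mem_setOf_eq, Set.mem_empty_iff_false, iff_false, not_exists]
      intro ℓ
      rintro ⟨h1, h2, -⟩
      omega
    have hrhs : lamMin (Matrix.hadamard (Rl G 1) W) = 0 := by
      unfold lamMin
      convert Real.sInf_empty using 2
      ext r
      simp only [Set.mem_setOf_eq, Set.mem_empty_iff_false, iff_false, not_exists]
      rintro u ⟨hu, -⟩
      simp at hu
    rw [hempty, hrhs, Real.sInf_empty]
  · have hall : ∀ j : Fin p, 1 ≤ (G j).card := fun j => (hGne j).card_pos
    have h1le : (1:ℕ) ≤ lstar := by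
      rw [hlstar]
      exact le_trans (hall ⟨0, hp⟩)
        (Finset.le_sup (f := fun j => (G j).card) (Finset.mem_univ (⟨0, hp⟩ : Fin p)))
    have hJl : ∀ ℓ : ℕ, ℓ ≤ lstar → ∃ j, ℓ ≤ (G j).card := by
      intro ℓ hℓ
      obtain ⟨j, -, hj⟩ := Finset.exists_mem_eq_sup Finset.univ
        ⟨⟨0, hp⟩, Finset.mem_univ _⟩ (fun j => (G j).card)
      exact ⟨j, by rw [hlstar] at hℓ; omega⟩
    have hmemval : lamMin ((Matrix.hadamard (Rl G 1) W).submatrix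
        (Subtype.val : {j : Fin p // 1 ≤ (G j).card} → Fin p) Subtype.val)
        = lamMin (Matrix.hadamard (Rl G 1) W) := by
      have he : (Matrix.hadamard (Rl G 1) W).submatrix
          (Subtype.val : {j : Fin p // 1 ≤ (G j).card} → Fin p) Subtype.val
          = (Matrix.hadamard (Rl G 1) W).submatrix
            (⇑(Equiv.subtypeUnivEquiv hall)) (⇑(Equiv.subtypeUnivEquiv hall)) := rfl
      rw [he, lamMin_submatrix_equiv]
    have hmem : lamMin (Matrix.hadamard (Rl G 1) W) ∈
        {r | ∃ ℓ : ℕ, 1 ≤ ℓ ∧ ℓ ≤ lstar ∧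
          r = lamMin ((Matrix.hadamard (Rl G ℓ) W).submatrix
            (Subtype.val : {j : Fin p // ℓ ≤ (G j).card} → Fin p) Subtype.val)} :=
      ⟨1, le_refl 1, h1le, hmemval.symm⟩
    have hlb : ∀ r ∈ {r | ∃ ℓ : ℕ, 1 ≤ ℓ ∧ ℓ ≤ lstar ∧
        r = lamMin ((Matrix.hadamard (Rl G ℓ) W).submatrix
          (Subtype.val : {j : Fin p // ℓ ≤ (G j).card} → Fin p) Subtype.val)},
        lamMin (Matrix.hadamard (Rl G 1) W) ≤ r := by
      rintro r ⟨ℓ, hl1, hl2, rfl⟩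
      exact lower_bound G hC W ℓ hl1 (hJl ℓ hl2)
    exact le_antisymm (csInf_le ⟨_, hlb⟩ hmem) (le_csInf ⟨_, hmem⟩ hlb)
end
end

section
/- For all integers ℓ ≥ 1 and a, b, c with 0 ≤ a ≤ min(b,c), ℓ ≤ b and ℓ ≤ c, the binomial ratio satisfies C(a,ℓ) · C(b,ℓ)^{−1/2} · C(c,ℓ)^{−1/2} ≤ a/√(b·c), where C(a,ℓ) = 0 if a < ℓ. Equivalently, when a ≥ ℓ, [a(a−1)⋯(a−ℓ+1)] / √( b(b−1)⋯(b−ℓ+1) · c(c−1)⋯(c−ℓ+1) ) ≤ a/√(bc). -/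
private lemma descFac_mono (k : ℕ) {m n : ℕ} (h : m ≤ n) :
    Nat.descFactorial m k ≤ Nat.descFactorial n k := by
  induction k with
  | zero => simp
  | succ k ih =>
      rw [Nat.descFactorial_succ, Nat.descFactorial_succ]
      exact Nat.mul_le_mul (Nat.sub_le_sub_right h k) ih

private lemma descFac_pos {k n : ℕ} (h : k ≤ n) : 0 < Nat.descFactorial n k := by
  induction k with
  | zero => simp
  | succ k ih =>
      rw [Nat.descFactorial_succ]
      exact Nat.mul_pos (Nat.sub_pos_of_lt h) (ih (Nat.le_of_succ_le h))

private lemma key_nat (ℓ a b c : ℕ) (hℓ : 1 ≤ ℓ) (hab : a ≤ b) (hac : a ≤ c) :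
    (Nat.descFactorial a ℓ)^2 * (b * c) ≤
      a^2 * (Nat.descFactorial b ℓ * Nat.descFactorial c ℓ) := by
  obtain ⟨m, rfl⟩ : ∃ m, ℓ = m + 1 := ⟨ℓ - 1, (Nat.succ_pred_eq_of_pos hℓ).symm⟩
  rcases Nat.eq_zero_or_pos a with rfl | ha
  · simp
  obtain ⟨a', rfl⟩ := Nat.exists_eq_add_of_lt ha
  obtain ⟨b', rfl⟩ := Nat.exists_eq_add_of_lt (lt_of_lt_of_le ha hab)
  obtain ⟨c', rfl⟩ := Nat.exists_eq_add_of_lt (lt_of_lt_of_le ha hac)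
  simp only [Nat.zero_add, Nat.succ_descFactorial_succ]
  have hA : a'.descFactorial m * a'.descFactorial m ≤ b'.descFactorial m * c'.descFactorial m :=
    Nat.mul_le_mul (descFac_mono m (by omega)) (descFac_mono m (by omega))
  calc ((a' + 1) * a'.descFactorial m)^2 * ((b' + 1) * (c' + 1))
      = (a' + 1)^2 * ((b' + 1) * (c' + 1)) * (a'.descFactorial m * a'.descFactorial m) := by ring
    _ ≤ (a' + 1)^2 * ((b' + 1) * (c' + 1)) * (b'.descFactorial m * c'.descFactorial m) :=
        Nat.mul_le_mul_left _ hA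
    _ = (a' + 1)^2 * ((b' + 1) * b'.descFactorial m * ((c' + 1) * c'.descFactorial m)) := by ring

private lemma key_real (ℓ a b c : ℕ) (hℓ : 1 ≤ ℓ) (hab : a ≤ b) (hac : a ≤ c)
    (hb : ℓ ≤ b) (hc : ℓ ≤ c) :
    (Nat.descFactorial a ℓ : ℝ) /
        Real.sqrt ((Nat.descFactorial b ℓ : ℝ) * (Nat.descFactorial c ℓ : ℝ)) ≤
      (a : ℝ) / Real.sqrt ((b : ℝ) * (c : ℝ)) := by
  have hB : (0:ℝ) < (Nat.descFactorial b ℓ : ℝ) * (Nat.descFactorial c ℓ : ℝ) := by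
    have := descFac_pos hb; have := descFac_pos hc; positivity
  have hbc : (0:ℝ) < (b:ℝ) * c := by
    have : 0 < b := lt_of_lt_of_le hℓ hb
    have : 0 < c := lt_of_lt_of_le hℓ hc
    positivity
  have e1 : (Nat.descFactorial a ℓ : ℝ) /
      Real.sqrt ((Nat.descFactorial b ℓ : ℝ) * (Nat.descFactorial c ℓ : ℝ)) =
      Real.sqrt (((Nat.descFactorial a ℓ : ℝ))^2 /
        ((Nat.descFactorial b ℓ : ℝ) * (Nat.descFactorial c ℓ : ℝ))) := by
    rw [Real.sqrt_div (by positivity), Real.sqrt_sq (by positivity)]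
  have e2 : (a : ℝ) / Real.sqrt ((b : ℝ) * c) =
      Real.sqrt ((a:ℝ)^2 / ((b:ℝ) * c)) := by
    rw [Real.sqrt_div (by positivity), Real.sqrt_sq (by positivity)]
  rw [e1, e2]
  apply Real.sqrt_le_sqrt
  rw [div_le_div_iff₀ hB hbc]
  have := key_nat ℓ a b c hℓ hab hac
  calc ((Nat.descFactorial a ℓ : ℝ))^2 * ((b:ℝ) * c)
      = (((Nat.descFactorial a ℓ)^2 * (b * c) : ℕ) : ℝ) := by push_cast; ring
    _ ≤ ((a^2 * (Nat.descFactorial b ℓ * Nat.descFactorial c ℓ) : ℕ) : ℝ) := by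
        exact_mod_cast this
    _ = (a:ℝ)^2 * ((Nat.descFactorial b ℓ : ℝ) * (Nat.descFactorial c ℓ : ℝ)) := by
        push_cast; ring

/-- The binomial-ratio inequality: for integers `ℓ ≥ 1` and `0 ≤ a ≤ min b c` with
`ℓ ≤ b` and `ℓ ≤ c`,
`C(a,ℓ) · C(b,ℓ)^{−1/2} · C(c,ℓ)^{−1/2} ≤ a/√(b·c)` (where `C(a,ℓ) = 0` if `a < ℓ`);
equivalently, when `a ≥ ℓ`, the falling-factorial form
`a(a−1)⋯(a−ℓ+1) / √(b(b−1)⋯(b−ℓ+1) · c(c−1)⋯(c−ℓ+1)) ≤ a/√(bc)` holds. -/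
theorem binomial_ratio_le_linear_ratio
    (ℓ a b c : ℕ) (hℓ : 1 ≤ ℓ) (hab : a ≤ min b c) (hb : ℓ ≤ b) (hc : ℓ ≤ c) :
    (Nat.choose a ℓ : ℝ) * (Real.sqrt (Nat.choose b ℓ))⁻¹ *
        (Real.sqrt (Nat.choose c ℓ))⁻¹ ≤
      (a : ℝ) / Real.sqrt ((b : ℝ) * (c : ℝ)) ∧
    (ℓ ≤ a →
      (Nat.descFactorial a ℓ : ℝ) /
          Real.sqrt ((Nat.descFactorial b ℓ : ℝ) * (Nat.descFactorial c ℓ : ℝ)) ≤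
        (a : ℝ) / Real.sqrt ((b : ℝ) * (c : ℝ))) := by
  have hab' : a ≤ b := le_trans hab (min_le_left _ _)
  have hac' : a ≤ c := le_trans hab (min_le_right _ _)
  have key := key_real ℓ a b c hℓ hab' hac' hb hc
  constructor
  · -- rewrite choose expression as descFactorial expression
    have hfac : (0:ℝ) < (Nat.factorial ℓ : ℝ) := by
      exact_mod_cast Nat.factorial_pos ℓ
    have eq1 : ∀ n : ℕ, (Nat.descFactorial n ℓ : ℝ) =
        (Nat.factorial ℓ : ℝ) * (Nat.choose n ℓ : ℝ) := by
      intro n; exact_mod_cast congrArg (Nat.cast (R := ℝ))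
        (Nat.descFactorial_eq_factorial_mul_choose n ℓ)
    have hchB : (0:ℝ) ≤ (Nat.choose b ℓ : ℝ) := by positivity
    have hchC : (0:ℝ) ≤ (Nat.choose c ℓ : ℝ) := by positivity
    have e : (Nat.descFactorial a ℓ : ℝ) /
        Real.sqrt ((Nat.descFactorial b ℓ : ℝ) * (Nat.descFactorial c ℓ : ℝ)) =
        (Nat.choose a ℓ : ℝ) * (Real.sqrt (Nat.choose b ℓ))⁻¹ *
          (Real.sqrt (Nat.choose c ℓ))⁻¹ := by
      rw [eq1 a, eq1 b, eq1 c]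
      rw [show (Nat.factorial ℓ : ℝ) * (Nat.choose b ℓ : ℝ) *
          ((Nat.factorial ℓ : ℝ) * (Nat.choose c ℓ : ℝ)) =
          ((Nat.factorial ℓ : ℝ))^2 * ((Nat.choose b ℓ : ℝ) * (Nat.choose c ℓ : ℝ)) by ring]
      rw [Real.sqrt_mul (by positivity), Real.sqrt_sq hfac.le,
        Real.sqrt_mul hchB]
      rw [mul_div_mul_left _ _ hfac.ne', div_eq_mul_inv, mul_inv, ← mul_assoc]
    rw [← e]; exact key
  · intro _; exact key
end
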